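/- The map Ψ((A,B), P) = A·P·B⁻¹ defines a transitive action of the product group PGL(3,ℝ) × A(3) on the set CP of central projections (equivalence classes up to scalar of 3×4 real matrices with invertible left 3×3 block), and the stabilizer of the canonical projection P₀ = (I₃ | 0) is the set of pairs ([A], [diag-block(A,1)]) with A ∈ GL(3,ℝ). -/

import Mathlib

open Matrix

noncomputable section

/-- The left 3×3 submatrix of a 3×4 matrix. -/
def leftBlock (P : Matrix (Fin 3) (Fin 4) ℝ) : Matrix (Fin 3) (Fin 3) ℝ :=
  fun i j => P i j.castSucc

/-- The canonical projection matrix `P₀ = (I₃ | 0)`. -/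
def P₀ : Matrix (Fin 3) (Fin 4) ℝ :=
  fun i j => if (j : ℕ) = (i : ℕ) then 1 else 0

/-- The 4×4 block-diagonal matrix `diag-block(A,1)`. -/
def diagBlock (A : Matrix (Fin 3) (Fin 3) ℝ) : Matrix (Fin 4) (Fin 4) ℝ :=
  fun i j =>
    if hi : (i : ℕ) < 3 then
      (if hj : (j : ℕ) < 3 then A ⟨i, hi⟩ ⟨j, hj⟩ else 0)
    else (if (j : ℕ) = 3 then 1 else 0)

/-- `B` represents an element of the affine group `A(3)`: invertible with last row `(0,0,0,1)`. -/
def isAff3 (B : Matrix (Fin 4) (Fin 4) ℝ) : Prop :=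
  IsUnit B.det ∧ ∀ j : Fin 4, B 3 j = if j = 3 then 1 else 0

/-- `P` represents a central projection. -/
def isCentral (P : Matrix (Fin 3) (Fin 4) ℝ) : Prop :=
  IsUnit (leftBlock P).det

-- auxiliary development
abbrev e4 : Fin 3 ⊕ Fin 1 ≃ Fin 4 := finSumFinEquiv

def sq4 (B : Matrix (Fin 4) (Fin 4) ℝ) : Matrix (Fin 3 ⊕ Fin 1) (Fin 3 ⊕ Fin 1) ℝ :=
  B.submatrix e4 e4

def rRe (P : Matrix (Fin 3) (Fin 4) ℝ) : Matrix (Fin 3) (Fin 3 ⊕ Fin 1) ℝ :=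
  P.submatrix id e4

lemma sq4_mul (B C : Matrix (Fin 4) (Fin 4) ℝ) : sq4 (B * C) = sq4 B * sq4 C :=
  (submatrix_mul_equiv B C _ e4 _).symm

lemma sq4_one : sq4 1 = 1 := submatrix_one_equiv e4

lemma sq4_det (B : Matrix (Fin 4) (Fin 4) ℝ) : (sq4 B).det = B.det :=
  det_submatrix_equiv_self e4 B

lemma sq4_inj {B C : Matrix (Fin 4) (Fin 4) ℝ} (h : sq4 B = sq4 C) : B = C := by
  funext i j
  have := congrFun (congrFun h (e4.symm i)) (e4.symm j)
  simpa [sq4] using this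

lemma rRe_inj {P Q : Matrix (Fin 3) (Fin 4) ℝ} (h : rRe P = rRe Q) : P = Q := by
  funext i j
  have := congrFun (congrFun h i) (e4.symm j)
  simpa [rRe] using this

lemma rRe_mul_right (P : Matrix (Fin 3) (Fin 4) ℝ) (B : Matrix (Fin 4) (Fin 4) ℝ) :
    rRe (P * B) = rRe P * sq4 B :=
  (submatrix_mul_equiv P B id e4 e4).symm

lemma rRe_mul_left (A : Matrix (Fin 3) (Fin 3) ℝ) (P : Matrix (Fin 3) (Fin 4) ℝ) :
    rRe (A * P) = A * rRe P := by
  have := submatrix_mul_equiv A P id (Equiv.refl (Fin 3)) e4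
  simpa [rRe] using this.symm

lemma rRe_smul (c : ℝ) (P : Matrix (Fin 3) (Fin 4) ℝ) : rRe (c • P) = c • rRe P := rfl

lemma e4_inl : ∀ j : Fin 3, e4 (Sum.inl j) = j.castSucc := by decide
lemma e4_inr : ∀ i : Fin 1, e4 (Sum.inr i) = 3 := by decide
lemma e4_symm_three : e4.symm 3 = Sum.inr 0 := by decide
lemma e4_symm_castSucc : ∀ j : Fin 3, e4.symm j.castSucc = Sum.inl j := by decide

def affMat (D : Matrix (Fin 3) (Fin 3) ℝ) (u : Matrix (Fin 3) (Fin 1) ℝ) :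
    Matrix (Fin 4) (Fin 4) ℝ :=
  (fromBlocks D u 0 1).submatrix e4.symm e4.symm

lemma sq4_affMat (D : Matrix (Fin 3) (Fin 3) ℝ) (u : Matrix (Fin 3) (Fin 1) ℝ) :
    sq4 (affMat D u) = fromBlocks D u 0 1 := by
  funext i j
  simp [sq4, affMat]

lemma affMat_det (D : Matrix (Fin 3) (Fin 3) ℝ) (u : Matrix (Fin 3) (Fin 1) ℝ) :
    (affMat D u).det = D.det := by
  rw [← sq4_det, sq4_affMat, det_fromBlocks_zero₂₁, det_one, mul_one]


lemma isAff3_affMat {D : Matrix (Fin 3) (Fin 3) ℝ} (u : Matrix (Fin 3) (Fin 1) ℝ)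
    (hD : IsUnit D.det) : isAff3 (affMat D u) := by
  refine ⟨by rwa [affMat_det], fun j => ?_⟩
  induction j using Fin.lastCases with
  | last =>
      have h3 : Fin.last 3 = (3 : Fin 4) := by decide
      rw [h3]
      have : affMat D u 3 3 = fromBlocks D u 0 1 (Sum.inr 0 : Fin 3 ⊕ Fin 1) (Sum.inr 0 : Fin 3 ⊕ Fin 1) := by
        simp [affMat, e4_symm_three]
      simp [this, fromBlocks]
  | cast j =>
      have hne : j.castSucc ≠ (3 : Fin 4) := by
        simp [Fin.ext_iff]; omega
      have : affMat D u 3 j.castSucc = fromBlocks D u 0 1 (Sum.inr 0 : Fin 3 ⊕ Fin 1) (Sum.inl j : Fin 3 ⊕ Fin 1) := by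
        simp [affMat, e4_symm_three, e4_symm_castSucc]
      simp [this, fromBlocks, hne]

lemma affMat_mul (D E : Matrix (Fin 3) (Fin 3) ℝ) (u w : Matrix (Fin 3) (Fin 1) ℝ) :
    affMat D u * affMat E w = affMat (D * E) (D * w + u) := by
  apply sq4_inj
  rw [sq4_mul, sq4_affMat, sq4_affMat, sq4_affMat, fromBlocks_multiply]
  congr 1 <;> simp

lemma affMat_one : affMat 1 0 = 1 := by
  apply sq4_inj
  rw [sq4_affMat, sq4_one, fromBlocks_one]

lemma affMat_inv {D : Matrix (Fin 3) (Fin 3) ℝ} (u : Matrix (Fin 3) (Fin 1) ℝ)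
    (hD : IsUnit D.det) : (affMat D u)⁻¹ = affMat D⁻¹ (-(D⁻¹ * u)) := by
  apply inv_eq_right_inv
  rw [affMat_mul, mul_nonsing_inv _ hD, Matrix.mul_neg, ← Matrix.mul_assoc,
    mul_nonsing_inv _ hD, Matrix.one_mul, neg_add_cancel, affMat_one]

lemma isAff3_decomp {B : Matrix (Fin 4) (Fin 4) ℝ} (hB : isAff3 B) :
    ∃ D u, IsUnit D.det ∧ B = affMat D u := by
  obtain ⟨hdet, hrow⟩ := hB
  have hne : ∀ j : Fin 3, j.castSucc ≠ (3 : Fin 4) := by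
    intro j; simp [Fin.ext_iff]; omega
  have hBeq : sq4 B = fromBlocks (sq4 B).toBlocks₁₁ (sq4 B).toBlocks₁₂ 0 1 := by
    funext i j
    cases i with
    | inl i =>
        cases j with
        | inl j => simp [fromBlocks, toBlocks₁₁]
        | inr j => simp [fromBlocks, toBlocks₁₂]
    | inr i =>
        cases j with
        | inl j =>
            have := hrow (e4 (Sum.inl j))
            rw [e4_inl] at this
            simp [fromBlocks, sq4, e4_inl, e4_inr, this, hne j]
        | inr j =>
            have := hrow 3
            fin_cases i; fin_cases j
            simp [fromBlocks, sq4, e4_inr, this, one_apply]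
  have hBaff : B = affMat (sq4 B).toBlocks₁₁ (sq4 B).toBlocks₁₂ := by
    apply sq4_inj
    rw [sq4_affMat]; exact hBeq
  refine ⟨_, _, ?_, hBaff⟩
  have : B.det = (sq4 B).toBlocks₁₁.det := by
    conv_lhs => rw [← sq4_det, hBeq]
    rw [det_fromBlocks_zero₂₁, det_one, mul_one]
  rwa [this] at hdet

lemma rRe_P₀ : rRe P₀ = fromCols 1 0 := by
  funext i j
  cases j with
  | inl j =>
      simp [rRe, P₀, fromCols, e4_inl, one_apply, Fin.ext_iff, eq_comm]
  | inr j =>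
      rw [show rRe P₀ i (Sum.inr j) = P₀ i (e4 (Sum.inr j)) from rfl, e4_inr]
      have : ((3 : Fin 4) : ℕ) ≠ (i : ℕ) := by omega
      simp [P₀, fromCols, this]; omega

def rCol (P : Matrix (Fin 3) (Fin 4) ℝ) : Matrix (Fin 3) (Fin 1) ℝ :=
  Matrix.of fun i _ => P i 3

lemma rRe_eq_fromColumns (P : Matrix (Fin 3) (Fin 4) ℝ) :
    rRe P = fromCols (leftBlock P) (rCol P) := by
  funext i j
  cases j with
  | inl j => simp [rRe, leftBlock, fromCols, e4_inl]
  | inr j =>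
      rw [show rRe P i (Sum.inr j) = P i (e4 (Sum.inr j)) from rfl, e4_inr]
      simp [fromCols, rCol]

lemma leftBlock_of_rRe {Q : Matrix (Fin 3) (Fin 4) ℝ} {X : Matrix (Fin 3) (Fin 3) ℝ}
    {Y : Matrix (Fin 3) (Fin 1) ℝ} (h : rRe Q = fromCols X Y) : leftBlock Q = X :=
  (fromCols_inj.eq_iff.mp ((rRe_eq_fromColumns Q).symm.trans h)).1

lemma diagBlock_eq (A : Matrix (Fin 3) (Fin 3) ℝ) : diagBlock A = affMat A 0 := by
  funext i j
  show _ = fromBlocks A 0 0 1 (e4.symm i) (e4.symm j)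
  induction i using Fin.lastCases with
  | last =>
      rw [show Fin.last 3 = (3:Fin 4) from by decide, e4_symm_three]
      induction j using Fin.lastCases with
      | last =>
          rw [show Fin.last 3 = (3:Fin 4) from by decide, e4_symm_three]
          have h1 : ¬ ((3:Fin 4) : ℕ) < 3 := by omega
          have h3 : ((3:Fin 4) : ℕ) = 3 := rfl
          simp [diagBlock, fromBlocks, one_apply, h1, h3]
      | cast j =>
          rw [e4_symm_castSucc]
          have h1 : ¬ ((3:Fin 4) : ℕ) < 3 := by omega
          have h2 : (j : ℕ) ≠ 3 := by omega
          simp [diagBlock, fromBlocks, h1, h2]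
  | cast i =>
      rw [e4_symm_castSucc]
      have hi : ((i.castSucc : Fin 4) : ℕ) < 3 := by simpa using i.isLt
      induction j using Fin.lastCases with
      | last =>
          rw [show Fin.last 3 = (3:Fin 4) from by decide, e4_symm_three]
          have h1 : ¬ ((3:Fin 4) : ℕ) < 3 := by omega
          simp [diagBlock, fromBlocks, hi, h1]
      | cast j =>
          rw [e4_symm_castSucc]
          have hj : ((j.castSucc : Fin 4) : ℕ) < 3 := by simpa using j.isLt
          simp [diagBlock, fromBlocks, hi, hj]

/-- every central P decomposes as M * P₀ * C with C affine -/
lemma central_decomp {P : Matrix (Fin 3) (Fin 4) ℝ} (hP : isCentral P) :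
    ∃ (A : Matrix (Fin 3) (Fin 3) ℝ) (C : Matrix (Fin 4) (Fin 4) ℝ),
      IsUnit A.det ∧ isAff3 C ∧ P = A * P₀ * C := by
  set M := leftBlock P with hM
  set v : Matrix (Fin 3) (Fin 1) ℝ := rCol P with hv
  refine ⟨M, affMat 1 (M⁻¹ * v), hP, isAff3_affMat _ (by simp), ?_⟩
  apply rRe_inj
  rw [Matrix.mul_assoc, rRe_mul_left, rRe_mul_right, rRe_P₀, sq4_affMat,
    fromCols_mul_fromBlocks, rRe_eq_fromColumns]
  rw [Matrix.mul_fromCols]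
  simp only [Matrix.mul_zero, Matrix.zero_mul, Matrix.one_mul, Matrix.mul_one, add_zero, zero_add]
  rw [Matrix.mul_nonsing_inv_cancel_left _ _ hP]

lemma aff_inv_decomp {B : Matrix (Fin 4) (Fin 4) ℝ} (hB : isAff3 B) :
    ∃ E w, IsUnit E.det ∧ B⁻¹ = affMat E w := by
  obtain ⟨D, u, hD, rfl⟩ := isAff3_decomp hB
  exact ⟨D⁻¹, -(D⁻¹ * u), isUnit_nonsing_inv_det _ hD, affMat_inv u hD⟩

lemma aff_inv {B : Matrix (Fin 4) (Fin 4) ℝ} (hB : isAff3 B) : isAff3 B⁻¹ := by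
  obtain ⟨E, w, hE, h⟩ := aff_inv_decomp hB
  rw [h]; exact isAff3_affMat _ hE

lemma aff_mul {B C : Matrix (Fin 4) (Fin 4) ℝ} (hB : isAff3 B) (hC : isAff3 C) :
    isAff3 (B * C) := by
  obtain ⟨D, u, hD, rfl⟩ := isAff3_decomp hB
  obtain ⟨E, w, hE, rfl⟩ := isAff3_decomp hC
  rw [affMat_mul]
  exact isAff3_affMat _ (by rw [det_mul]; exact hD.mul hE)

lemma smul_fromColumns (c : ℝ) (X : Matrix (Fin 3) (Fin 3) ℝ) (Y : Matrix (Fin 3) (Fin 1) ℝ) :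
    c • fromCols X Y = fromCols (c • X) (c • Y) := by
  funext i j; cases j <;> simp [fromCols]

lemma isUnit_det_smul {c : ℝ} (hc : c ≠ 0) {A : Matrix (Fin 3) (Fin 3) ℝ}
    (hA : IsUnit A.det) : IsUnit ((c • A).det) := by
  rw [det_smul]
  exact (IsUnit.mk0 _ (pow_ne_zero _ hc)).mul hA

lemma smul_matrix_inv {c : ℝ} (hc : c ≠ 0) {A : Matrix (Fin 3) (Fin 3) ℝ}
    (hA : IsUnit A.det) : (c • A)⁻¹ = c⁻¹ • A⁻¹ := by
  apply inv_eq_right_inv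
  rw [Matrix.smul_mul, Matrix.mul_smul, smul_smul, mul_inv_cancel₀ hc,
    mul_nonsing_inv _ hA, one_smul]


theorem cp_is_homogeneous_space :
    -- Ψ((A,B),P) = A·P·B⁻¹ maps central projections to central projections,
    (∀ (A : Matrix (Fin 3) (Fin 3) ℝ) (B : Matrix (Fin 4) (Fin 4) ℝ)
        (P : Matrix (Fin 3) (Fin 4) ℝ),
        IsUnit A.det → isAff3 B → isCentral P → isCentral (A * P * B⁻¹)) ∧
    -- the action is transitive on central projections (up to nonzero scalar),
    (∀ P Q : Matrix (Fin 3) (Fin 4) ℝ, isCentral P → isCentral Q →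
        ∃ (A : Matrix (Fin 3) (Fin 3) ℝ) (B : Matrix (Fin 4) (Fin 4) ℝ) (lam : ℝ),
          IsUnit A.det ∧ isAff3 B ∧ lam ≠ 0 ∧ Q = lam • (A * P * B⁻¹)) ∧
    -- and the stabilizer of P₀ consists exactly of the pairs ([A], [diag-block(A,1)]).
    (∀ (A : Matrix (Fin 3) (Fin 3) ℝ) (B : Matrix (Fin 4) (Fin 4) ℝ),
        IsUnit A.det → isAff3 B →
        ((∃ lam : ℝ, lam ≠ 0 ∧ A * P₀ * B⁻¹ = lam • P₀) ↔
          ∃ mu : ℝ, mu ≠ 0 ∧ B = diagBlock (mu • A))) := by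
  refine ⟨?_, ?_, ?_⟩
  · -- part 1
    intro A B P hA hB hP
    obtain ⟨E, w, hE, hBi⟩ := aff_inv_decomp hB
    rw [hBi]
    have h1 : leftBlock (A * P * affMat E w) = A * leftBlock P * E := by
      apply leftBlock_of_rRe (Y := A * leftBlock P * w + A * rCol P * (1 : Matrix (Fin 1) (Fin 1) ℝ))
      rw [rRe_mul_right, sq4_affMat, rRe_mul_left, rRe_eq_fromColumns,
        Matrix.mul_fromCols, fromCols_mul_fromBlocks]
      congr 1
      simp
    unfold isCentral
    rw [h1, det_mul, det_mul]
    exact (hA.mul hP).mul hE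
  · -- part 2: transitivity
    intro P Q hP hQ
    obtain ⟨AP, CP, hAP, hCP, rfl⟩ := central_decomp hP
    obtain ⟨AQ, CQ, hAQ, hCQ, rfl⟩ := central_decomp hQ
    refine ⟨AQ * AP⁻¹, CQ⁻¹ * CP, 1, ?_, ?_, one_ne_zero, ?_⟩
    · rw [det_mul]; exact hAQ.mul (isUnit_nonsing_inv_det _ hAP)
    · exact aff_mul (aff_inv hCQ) hCP
    · rw [one_smul, Matrix.mul_inv_rev, nonsing_inv_nonsing_inv _ hCQ.1]
      simp only [Matrix.mul_assoc]
      rw [Matrix.nonsing_inv_mul_cancel_left _ _ hAP,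
        Matrix.mul_nonsing_inv_cancel_left _ _ hCP.1]
  · -- part 3: stabilizer
    intro A B hA hB
    constructor
    · rintro ⟨lam, hlam, h⟩
      obtain ⟨E, w, hE, hBi⟩ := aff_inv_decomp hB
      have h1 : fromCols (A * E) (A * w) =
          fromCols (lam • (1 : Matrix (Fin 3) (Fin 3) ℝ)) (0 : Matrix (Fin 3) (Fin 1) ℝ) := by
        have h2 := congrArg rRe h
        rw [rRe_mul_right, hBi, sq4_affMat, rRe_mul_left, rRe_P₀,
          Matrix.mul_fromCols, fromCols_mul_fromBlocks, rRe_smul, rRe_P₀,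
          smul_fromColumns] at h2
        simpa using h2
      obtain ⟨hEq, hwq⟩ := fromCols_inj.eq_iff.mp h1
      have hw0 : w = 0 := by
        have := congrArg (fun X => A⁻¹ * X) hwq
        simpa [Matrix.nonsing_inv_mul_cancel_left _ _ hA] using this
      have hEA : E = lam • A⁻¹ := by
        have := congrArg (fun X => A⁻¹ * X) hEq
        simpa [Matrix.nonsing_inv_mul_cancel_left _ _ hA, Matrix.mul_smul] using this
      refine ⟨lam⁻¹, inv_ne_zero hlam, ?_⟩
      have hBinv : B⁻¹ = affMat (lam • A⁻¹) 0 := by rw [hBi, hw0, hEA]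
      have hdet : IsUnit ((lam • A⁻¹).det) :=
        isUnit_det_smul hlam (isUnit_nonsing_inv_det _ hA)
      have hBB : B = (affMat (lam • A⁻¹) 0)⁻¹ := by
        rw [← hBinv, nonsing_inv_nonsing_inv _ hB.1]
      rw [diagBlock_eq, hBB, affMat_inv _ hdet,
        smul_matrix_inv hlam (isUnit_nonsing_inv_det _ hA),
        nonsing_inv_nonsing_inv _ hA]
      simp
    · rintro ⟨mu, hmu, rfl⟩
      refine ⟨mu⁻¹, inv_ne_zero hmu, ?_⟩
      have hdet : IsUnit ((mu • A).det) := isUnit_det_smul hmu hA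
      rw [diagBlock_eq]
      apply rRe_inj
      have hBinv : (affMat (mu • A) 0)⁻¹ = affMat (mu⁻¹ • A⁻¹) 0 := by
        rw [affMat_inv _ hdet, smul_matrix_inv hmu hA]
        simp
      rw [rRe_mul_right, hBinv, sq4_affMat, rRe_mul_left, rRe_P₀,
        Matrix.mul_fromCols, fromCols_mul_fromBlocks, rRe_smul, rRe_P₀,
        smul_fromColumns]
      congr 1
      simp [Matrix.mul_smul, mul_nonsing_inv _ hA]
      simp

end
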